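/- arXiv:1303.6447 — 2 statements merged into one kernel-verified Lean document; each statement's English description precedes it below -/
import Mathlib

section
/- Let u be a subset of {1,…,p}. Then Var(E[Y | X_i, i ∈ u]) = Cov(Y, Y^u), i.e. the numerator of the closed Sobol index equals the covariance between the output and its pick-freeze replication. -/
/-! Write `X_u`, `X_{-u}` for the coordinates of `X` inside and outside `u`, and `X'_{-u}` for
those of the copy outside `u`. The triple `(X_u, X_{-u}, X'_{-u})` has independent components, so
with `g x = E f(x, X_{-u})` one gets `E[Y | X_u] = g(X_u)`, and by Fubini
`E[Y Y^u] = E[g(X_u)^2]` since `X_{-u}` and `X'_{-u}` are integrated out separately. As moreover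
`E Y = E Y^u = E g(X_u)`, both sides equal `E[g(X_u)^2] - (E g(X_u))^2`. -/

open MeasureTheory ProbabilityTheory Filter Finset
open scoped NNReal ENNReal Topology

noncomputable section

namespace SobolPaper

variable {p : ℕ} {𝒳 : Fin p → Type*} [∀ i, MeasurableSpace (𝒳 i)]

/-- The pick-freeze probability space: two independent copies of the input vector
`X = (X₁,…,X_p)` (with independent coordinates) are modeled canonically as the two
canonical projections of the product of two copies of the product measure. -/
def pfMeasure (ν : ∀ i, Measure (𝒳 i)) : Measure ((∀ i, 𝒳 i) × (∀ i, 𝒳 i)) :=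
  (Measure.pi ν).prod (Measure.pi ν)

instance (ν : ∀ i, Measure (𝒳 i)) [∀ i, IsProbabilityMeasure (ν i)] :
    IsProbabilityMeasure (pfMeasure ν) := by
  unfold pfMeasure; infer_instance

/-- The output `Y = f(X)`. -/
def Yout (f : (∀ i, 𝒳 i) → ℝ) (ω : (∀ i, 𝒳 i) × (∀ i, 𝒳 i)) : ℝ := f ω.1

/-- The pick-freeze input `X^u`: coordinates in `u` are frozen (taken from `X`),
the others are resampled (taken from the independent copy `X'`). -/
def Xpf (u : Finset (Fin p)) (ω : (∀ i, 𝒳 i) × (∀ i, 𝒳 i)) : ∀ i, 𝒳 i :=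
  fun i => if i ∈ u then ω.1 i else ω.2 i

/-- The pick-freeze replication `Y^u = f(X^u)`. -/
def Ypf (f : (∀ i, 𝒳 i) → ℝ) (u : Finset (Fin p)) (ω : (∀ i, 𝒳 i) × (∀ i, 𝒳 i)) : ℝ :=
  f (Xpf u ω)

/-- Covariance of two real random variables. -/
def cov {α : Type*} [MeasurableSpace α] (μ : Measure α) (g h : α → ℝ) : ℝ :=
  ∫ a, g a * h a ∂μ - (∫ a, g a ∂μ) * ∫ a, h a ∂μ

/-- The closed Sobol index `S^u_Cl = Cov(Y, Y^u) / Var(Y)`. -/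
def SCl (ν : ∀ i, Measure (𝒳 i)) (f : (∀ i, 𝒳 i) → ℝ) (u : Finset (Fin p)) : ℝ :=
  cov (pfMeasure ν) (Yout f) (Ypf f u) / variance (Yout f) (pfMeasure ν)

section PickFreeze

variable {Ω α β : Type*} {mΩ : MeasurableSpace Ω} [MeasurableSpace α] [MeasurableSpace β]
  {P : Measure Ω} {μα : Measure α} {μβ : Measure β} {F : α × β → ℝ}

lemma _root_.MeasureTheory.MeasurePreserving.setIntegral_preimage {γ : Type*}
    [MeasurableSpace γ] {G : Type*} [NormedAddCommGroup G] [NormedSpace ℝ G] {ν : Measure γ}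
    {T : Ω → γ} (hT : MeasurePreserving T P ν) {H : γ → G}
    (hH : AEStronglyMeasurable H ν) {S : Set γ} (hS : MeasurableSet S) :
    ∫ ω in T ⁻¹' S, H (T ω) ∂P = ∫ y in S, H y ∂ν := by
  rw [← hT.map_eq] at hH ⊢
  exact (setIntegral_map hS hH hT.measurable.aemeasurable).symm

lemma integral_mul_prod_prod_eq_integral_sq [SFinite μα] [IsProbabilityMeasure μβ]
    (hF : MemLp F 2 (μα.prod μβ)) :
    ∫ w, F (w.1, w.2.1) * F (w.1, w.2.2) ∂(μα.prod (μβ.prod μβ)) =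
      ∫ x, (∫ z, F (x, z) ∂μβ) ^ 2 ∂μα := by
  have hproj₁ : MeasurePreserving (fun w : α × β × β => (w.1, w.2.1))
      (μα.prod (μβ.prod μβ)) (μα.prod μβ) :=
    (MeasurePreserving.id μα).prod measurePreserving_fst
  have hproj₂ : MeasurePreserving (fun w : α × β × β => (w.1, w.2.2))
      (μα.prod (μβ.prod μβ)) (μα.prod μβ) :=
    (MeasurePreserving.id μα).prod measurePreserving_snd
  have hint : Integrable (fun w : α × β × β => F (w.1, w.2.1) * F (w.1, w.2.2))
      (μα.prod (μβ.prod μβ)) :=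
    (hF.comp_measurePreserving hproj₁).integrable_mul (hF.comp_measurePreserving hproj₂)
  rw [integral_prod _ hint]
  congr with x
  exact (integral_prod_mul (fun z => F (x, z)) (fun z => F (x, z))).trans (sq _).symm

lemma condExp_comap_ae_eq_integral_prod [IsProbabilityMeasure μα] [IsProbabilityMeasure μβ]
    {X : Ω → α} {Z : Ω → β} (hXZ : MeasurePreserving (fun ω => (X ω, Z ω)) P (μα.prod μβ))
    (hF : Measurable F) (hFint : Integrable F (μα.prod μβ)) :
    P[fun ω => F (X ω, Z ω) | MeasurableSpace.comap X inferInstance] =ᵐ[P]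
      fun ω => ∫ z, F (X ω, z) ∂μβ := by
  have hX : MeasurePreserving X P μα := measurePreserving_fst.comp hXZ
  have := hXZ.hasLaw.isProbabilityMeasure
  have hg : StronglyMeasurable fun x => ∫ z, F (x, z) ∂μβ :=
    hF.stronglyMeasurable.integral_prod_right'
  refine (ae_eq_condExp_of_forall_setIntegral_eq hX.measurable.comap_le
    (hXZ.integrable_comp_of_integrable hFint) (fun s _ _ => ?_) ?_ ?_).symm
  · exact (hX.integrable_comp_of_integrable hFint.integral_prod_left).integrableOn
  · rintro s ⟨t, ht, rfl⟩ -
    calc ∫ ω in X ⁻¹' t, ∫ z, F (X ω, z) ∂μβ ∂P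
        = ∫ x in t, ∫ z, F (x, z) ∂μβ ∂μα := hX.setIntegral_preimage hg.aestronglyMeasurable ht
      _ = ∫ q in t ×ˢ Set.univ, F q ∂(μα.prod μβ) := by
          rw [setIntegral_prod _ hFint.integrableOn, Measure.restrict_univ]
      _ = ∫ ω in X ⁻¹' t, F (X ω, Z ω) ∂P := by
          rw [← hXZ.setIntegral_preimage hF.aestronglyMeasurable (ht.prod .univ),
            Set.mk_preimage_prod, Set.preimage_univ, Set.inter_univ]
  · exact (hg.comp_measurable (Measurable.of_comap_le le_rfl)).aestronglyMeasurable

lemma variance_condExp_eq_cov_pickFreeze [IsProbabilityMeasure μα] [IsProbabilityMeasure μβ]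
    {X : Ω → α} {Z Z' : Ω → β}
    (hXZZ' : MeasurePreserving (fun ω => (X ω, Z ω, Z' ω)) P (μα.prod (μβ.prod μβ)))
    (hF : Measurable F) (hY : MemLp (fun ω => F (X ω, Z ω)) 2 P) :
    variance (P[fun ω => F (X ω, Z ω) | MeasurableSpace.comap X inferInstance]) P =
      cov P (fun ω => F (X ω, Z ω)) (fun ω => F (X ω, Z' ω)) := by
  have := hXZZ'.hasLaw.isProbabilityMeasure
  have hXZ : MeasurePreserving (fun ω => (X ω, Z ω)) P (μα.prod μβ) :=
    ((MeasurePreserving.id μα).prod measurePreserving_fst).comp hXZZ'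
  have hXZ' : MeasurePreserving (fun ω => (X ω, Z' ω)) P (μα.prod μβ) :=
    ((MeasurePreserving.id μα).prod measurePreserving_snd).comp hXZZ'
  have hX : MeasurePreserving X P μα := measurePreserving_fst.comp hXZ
  have hF2 : MemLp F 2 (μα.prod μβ) := by
    rw [← hXZ.map_eq]
    exact (memLp_map_measure_iff hF.aestronglyMeasurable hXZ.measurable.aemeasurable).mpr hY
  set g : α → ℝ := fun x => ∫ z, F (x, z) ∂μβ
  have hg : StronglyMeasurable g := hF.stronglyMeasurable.integral_prod_right'
  have hcond := condExp_comap_ae_eq_integral_prod hXZ hF (hF2.integrable one_le_two)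
  have hg2 : MemLp (fun ω => g (X ω)) 2 P := (hY.condExp one_le_two).ae_eq hcond
  have hEF : ∫ q, F q ∂(μα.prod μβ) = ∫ x, g x ∂μα := integral_prod F (hF2.integrable one_le_two)
  have hEg2 : ∫ ω, g (X ω) ^ 2 ∂P = ∫ x, g x ^ 2 ∂μα :=
    hX.hasLaw.integral_comp (hg.pow 2).aestronglyMeasurable
  have hEg : ∫ ω, g (X ω) ∂P = ∫ x, g x ∂μα := hX.hasLaw.integral_comp hg.aestronglyMeasurable
  have hEFZ : ∫ ω, F (X ω, Z ω) ∂P = ∫ x, g x ∂μα :=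
    (hXZ.hasLaw.integral_comp hF.aestronglyMeasurable).trans hEF
  have hEFZ' : ∫ ω, F (X ω, Z' ω) ∂P = ∫ x, g x ∂μα :=
    (hXZ'.hasLaw.integral_comp hF.aestronglyMeasurable).trans hEF
  have hEFF : ∫ ω, F (X ω, Z ω) * F (X ω, Z' ω) ∂P = ∫ x, g x ^ 2 ∂μα :=
    (hXZZ'.hasLaw.integral_comp (f := fun w => F (w.1, w.2.1) * F (w.1, w.2.2))
      (by fun_prop)).trans (integral_mul_prod_prod_eq_integral_sq hF2)
  rw [variance_congr hcond, variance_eq_sub hg2, cov]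
  simp only [Pi.pow_apply]
  rw [hEg2, hEg, hEFF, hEFZ, hEFZ', sq]

end PickFreeze

section Coordinates

variable {ι : Type*} {E : ι → Type*} [∀ i, MeasurableSpace (E i)]

lemma measurePreserving_pickFreeze [Fintype ι] (ν : ∀ i, Measure (E i))
    [∀ i, IsProbabilityMeasure (ν i)] (s : ι → Prop) [DecidablePred s] :
    MeasurePreserving
      (fun ω : (∀ i, E i) × (∀ i, E i) =>
        (fun i : Subtype s => ω.1 i, fun i : {i // ¬ s i} => ω.1 i, fun i : {i // ¬ s i} => ω.2 i))
      ((Measure.pi ν).prod (Measure.pi ν))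
      ((Measure.pi fun i : Subtype s => ν i).prod
        ((Measure.pi fun i : {i // ¬ s i} => ν i).prod (Measure.pi fun i : {i // ¬ s i} => ν i))) :=
  have he := measurePreserving_piEquivPiSubtypeProd ν s
  (measurePreserving_prodAssoc _ _ _).comp (he.prod (measurePreserving_snd.comp he))

lemma piEquivPiSubtypeProd_symm_ite (s : ι → Prop) [DecidablePred s] (x y : ∀ i, E i) :
    (MeasurableEquiv.piEquivPiSubtypeProd E s).symm
        (fun i : Subtype s => x i, fun i : {i // ¬ s i} => y i) =
      fun i => if s i then x i else y i := by
  ext i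
  by_cases h : s i <;> simp [MeasurableEquiv.piEquivPiSubtypeProd, h]

end Coordinates

theorem statement0_general
    {p : ℕ} {𝒳 : Fin p → Type*} [∀ i, MeasurableSpace (𝒳 i)]
    (ν : ∀ i, Measure (𝒳 i)) [∀ i, IsProbabilityMeasure (ν i)]
    (f : (∀ i, 𝒳 i) → ℝ) (hf : Measurable f)
    (hY2 : MemLp (Yout f) 2 (pfMeasure ν))
    (u : Finset (Fin p)) :
    variance
      ((pfMeasure ν)[Yout f |
        MeasurableSpace.comap (fun ω : (∀ i, 𝒳 i) × (∀ i, 𝒳 i) =>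
          fun i : {i // i ∈ u} => ω.1 i) inferInstance])
      (pfMeasure ν)
      = cov (pfMeasure ν) (Yout f) (Ypf f u) := by
  set e := MeasurableEquiv.piEquivPiSubtypeProd 𝒳 (· ∈ u)
  have hY : Yout f = fun ω => f (e.symm (fun i => ω.1 i, fun i => ω.1 i)) := by
    ext ω
    simp only [Yout, e, piEquivPiSubtypeProd_symm_ite, ite_self]
  have hYu : Ypf f u = fun ω => f (e.symm (fun i => ω.1 i, fun i => ω.2 i)) :=
    funext fun ω => congrArg f (piEquivPiSubtypeProd_symm_ite _ _ _).symm
  have hpickFreeze := variance_condExp_eq_cov_pickFreeze (measurePreserving_pickFreeze ν (· ∈ u))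
    (F := f ∘ e.symm) (hf.comp e.symm.measurable) (hY ▸ hY2)
  rw [hY, hYu]
  exact hpickFreeze

/-- `Var(E[Y | X_i, i ∈ u]) = Cov(Y, Y^u)`. -/
theorem statement0
    {p : ℕ} {𝒳 : Fin p → Type*} [∀ i, MeasurableSpace (𝒳 i)]
    (ν : ∀ i, Measure (𝒳 i)) [∀ i, IsProbabilityMeasure (ν i)]
    (f : (∀ i, 𝒳 i) → ℝ) (hf : Measurable f)
    (hY2 : MemLp (Yout f) 2 (pfMeasure ν))
    (hVar : variance (Yout f) (pfMeasure ν) ≠ 0)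
    (u : Finset (Fin p)) :
    variance
      ((pfMeasure ν)[Yout f |
        MeasurableSpace.comap (fun ω : (∀ i, 𝒳 i) × (∀ i, 𝒳 i) =>
          fun i : {i // i ∈ u} => ω.1 i) inferInstance])
      (pfMeasure ν)
      = cov (pfMeasure ν) (Yout f) (Ypf f u) :=
  statement0_general ν f hf hY2 u

end SobolPaper
end
end

section
/- Assume E(Y) = 0 and Var(Y) = V ≠ 0, fix y > 0, and for an i.i.d. sample (Y_i, Y_i^u), 1 ≤ i ≤ N, set U_i⁺ = Y_i Y_i^u − (S^{u}_{Cl} + y) Y_i² and J_i⁺ = (S^{u}_{Cl} + y) Y_i − Y_i^u. Then P(S^{u}_{N,Cl} ≥ S^{u}_{Cl} + y) ≤ P(Σ_{i=1}^N (U_i⁺ − E(U⁺)) ≥ N yV/2) + P(Σ_{i=1}^N Y_i ≥ N √(yV/2)) + P(Σ_{i=1}^N (−Y_i) ≥ N √(yV/2)) + P(Σ_{i=1}^N J_i⁺ ≥ N √(yV/2)) + P(Σ_{i=1}^N (−J_i⁺) ≥ N √(yV/2)). -/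
open MeasureTheory ProbabilityTheory Filter Finset
open scoped NNReal ENNReal Topology

noncomputable section

namespace SobolPaper

variable {p : ℕ} {𝒳 : Fin p → Type*} [∀ i, MeasurableSpace (𝒳 i)]

/-- First pick-freeze estimator `S^u_{N,Cl}` (case `k = 1`) built from a sample
`W i ω = (Y_i(ω), Y_i^u(ω))`. -/
def SN1 {Ω' : Type*} (W : ℕ → Ω' → ℝ × ℝ) (N : ℕ) (ω : Ω') : ℝ :=
  ((∑ i ∈ Finset.range N, (W i ω).1 * (W i ω).2) / N -
      ((∑ i ∈ Finset.range N, (W i ω).1) / N) * ((∑ i ∈ Finset.range N, (W i ω).2) / N)) /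
    ((∑ i ∈ Finset.range N, (W i ω).1 ^ 2) / N - ((∑ i ∈ Finset.range N, (W i ω).1) / N) ^ 2)

/-- Second pick-freeze estimator `T^u_{N,Cl}` (case `k = 1`) built from a sample
`W i ω = (Y_i(ω), Y_i^u(ω))`. -/
def TN1 {Ω' : Type*} (W : ℕ → Ω' → ℝ × ℝ) (N : ℕ) (ω : Ω') : ℝ :=
  ((∑ i ∈ Finset.range N, (W i ω).1 * (W i ω).2) / N -
      ((∑ i ∈ Finset.range N, ((W i ω).1 + (W i ω).2)) / (2 * N)) ^ 2) /
    ((∑ i ∈ Finset.range N, ((W i ω).1 ^ 2 + (W i ω).2 ^ 2)) / (2 * N) -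
      ((∑ i ∈ Finset.range N, ((W i ω).1 + (W i ω).2)) / (2 * N)) ^ 2)

/-!
On the event `S + y ≤ S_N`, clearing the denominator gives
`(S + y) (N ΣYᵢ² - (ΣYᵢ)²) ≤ N ΣYᵢYᵢᵘ - ΣYᵢ ΣYᵢᵘ`: the denominator is nonnegative by
Cauchy–Schwarz, and when it vanishes the sample `Yᵢ` is constant, so the numerator vanishes too.
Since `E Y = 0`, `E U⁺ = -yV`. If the first deviation event fails, then
`ΣYᵢ ΣJᵢ⁺ > N² yV/2`, so `|ΣYᵢ|` or `|ΣJᵢ⁺|` is at least `N √(yV/2)`; a union bound ends the proof.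
-/

theorem card_mul_sum_mul_sub_sum_mul_sum {ι : Type*} (s : Finset ι) (a b : ι → ℝ) :
    #s * ∑ i ∈ s, a i * b i - (∑ i ∈ s, a i) * ∑ i ∈ s, b i =
      (∑ i ∈ s, ∑ j ∈ s, (a i - a j) * (b i - b j)) / 2 := by
  simp only [sub_mul, mul_sub, sum_sub_distrib, sum_const, nsmul_eq_mul, ← mul_sum, ← sum_mul]
  ring

theorem card_mul_sum_mul_eq_of_card_mul_sum_sq_eq {ι : Type*} (s : Finset ι) (a b : ι → ℝ)
    (h : #s * ∑ i ∈ s, a i ^ 2 = (∑ i ∈ s, a i) ^ 2) :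
    #s * ∑ i ∈ s, a i * b i = (∑ i ∈ s, a i) * ∑ i ∈ s, b i := by
  have hzero : ∑ i ∈ s, ∑ j ∈ s, (a i - a j) ^ 2 = 0 := by
    have := card_mul_sum_mul_sub_sum_mul_sum s a a
    simp only [← sq, h, sub_self] at this
    linarith
  have hconst : ∀ i ∈ s, ∀ j ∈ s, a i = a j := by
    intro i hi j hj
    have hrow := (sum_eq_zero_iff_of_nonneg fun i _ =>
      sum_nonneg fun j _ => sq_nonneg (a i - a j)).1 hzero i hi
    have hij := (sum_eq_zero_iff_of_nonneg fun j _ => sq_nonneg (a i - a j)).1 hrow j hj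
    exact sub_eq_zero.1 (pow_eq_zero_iff two_ne_zero |>.1 hij)
  rw [← sub_eq_zero, card_mul_sum_mul_sub_sum_mul_sum]
  simp only [div_eq_zero_iff, two_ne_zero, or_false]
  exact sum_eq_zero fun i hi => sum_eq_zero fun j hj => by rw [hconst i hi j hj, sub_self, zero_mul]

theorem mul_denom_le_numer_of_le_SN1 {Ω' : Type*} {W : ℕ → Ω' → ℝ × ℝ} {N : ℕ} {ω : Ω'}
    {t : ℝ} (hN : 0 < N) (ht : t ≤ SN1 W N ω) :
    t * (N * ∑ i ∈ range N, (W i ω).1 ^ 2 - (∑ i ∈ range N, (W i ω).1) ^ 2) ≤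
      N * ∑ i ∈ range N, (W i ω).1 * (W i ω).2 -
        (∑ i ∈ range N, (W i ω).1) * ∑ i ∈ range N, (W i ω).2 := by
  have hN' : (N : ℝ) ≠ 0 := by positivity
  have hSN : SN1 W N ω =
      (N * ∑ i ∈ range N, (W i ω).1 * (W i ω).2 -
        (∑ i ∈ range N, (W i ω).1) * ∑ i ∈ range N, (W i ω).2) /
      (N * ∑ i ∈ range N, (W i ω).1 ^ 2 - (∑ i ∈ range N, (W i ω).1) ^ 2) := by
    rw [SN1]
    field_simp
  have hCS := sq_sum_le_card_mul_sum_sq (s := range N) (f := fun i => (W i ω).1)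
  rw [card_range] at hCS
  rcases hCS.lt_or_eq with hpos | hdeg
  · rw [hSN, le_div_iff₀ (sub_pos.2 hpos)] at ht
    linarith
  · -- `SN1` is the junk value `0 / 0` here
    have hnum := card_mul_sum_mul_eq_of_card_mul_sum_sq_eq (range N) (fun i => (W i ω).1)
      (fun i => (W i ω).2) (by rw [card_range]; exact hdeg.symm)
    rw [card_range] at hnum
    rw [← hdeg, hnum, sub_self, sub_self, mul_zero]

theorem le_abs_or_le_abs_of_sq_lt_mul {c x y : ℝ} (hc : 0 ≤ c) (h : c ^ 2 < x * y) :
    c ≤ |x| ∨ c ≤ |y| := by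
  by_contra! hlt
  have : x * y ≤ c * c := calc
    x * y ≤ |x| * |y| := by rw [← abs_mul]; exact le_abs_self _
    _ ≤ c * c := mul_le_mul hlt.1.le hlt.2.le (abs_nonneg y) hc
  nlinarith

theorem le_or_le_of_mul_denom_le_numer {n s₁ s₂ sA sQ t c : ℝ} (hn : 0 < n) (hc : 0 ≤ c)
    (hkey : t * (n * sQ - s₁ ^ 2) ≤ n * sA - s₁ * s₂) (hU : sA - t * sQ < -(n * c ^ 2)) :
    n * c ≤ s₁ ∨ n * c ≤ -s₁ ∨ n * c ≤ t * s₁ - s₂ ∨ n * c ≤ -(t * s₁ - s₂) := by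
  have hprod : (n * c) ^ 2 < s₁ * (t * s₁ - s₂) := by nlinarith
  rcases le_abs_or_le_abs_of_sq_lt_mul (by positivity) hprod with hs | hJ
  · exact (le_abs.1 hs).imp_right .inl
  · exact .inr (.inr (le_abs.1 hJ))

theorem setOf_le_SN1_subset {Ω' : Type*} (W : ℕ → Ω' → ℝ × ℝ) (N : ℕ) {t v e : ℝ}
    (hv : 0 ≤ v) (he : e = -(2 * v)) :
    {ω | t ≤ SN1 W N ω} ⊆
      {ω | N * v ≤ ∑ i ∈ range N, ((W i ω).1 * (W i ω).2 - t * (W i ω).1 ^ 2 - e)} ∪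
      {ω | N * √v ≤ ∑ i ∈ range N, (W i ω).1} ∪
      {ω | N * √v ≤ ∑ i ∈ range N, -(W i ω).1} ∪
      {ω | N * √v ≤ ∑ i ∈ range N, (t * (W i ω).1 - (W i ω).2)} ∪
      {ω | N * √v ≤ ∑ i ∈ range N, -(t * (W i ω).1 - (W i ω).2)} := by
  intro ω ht
  rcases Nat.eq_zero_or_pos N with rfl | hN
  · simp
  simp only [Set.mem_union, Set.mem_ofPred_eq, sum_sub_distrib, sum_neg_distrib, ← mul_sum,
    sum_const, card_range, nsmul_eq_mul]
  by_cases hU : N * v ≤ ∑ i ∈ range N, (W i ω).1 * (W i ω).2 -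
      t * ∑ i ∈ range N, (W i ω).1 ^ 2 - N * e
  · exact .inl (.inl (.inl (.inl hU)))
  have hU' : ∑ i ∈ range N, (W i ω).1 * (W i ω).2 - t * ∑ i ∈ range N, (W i ω).1 ^ 2 <
      -(N * √v ^ 2) := by
    rw [he] at hU
    rw [Real.sq_sqrt hv]
    linarith
  rcases le_or_le_of_mul_denom_le_numer (by positivity) (Real.sqrt_nonneg v)
    (mul_denom_le_numer_of_le_SN1 hN ht) hU' with h | h | h | h
  · exact .inl (.inl (.inl (.inr h)))
  · exact .inl (.inl (.inr h))
  · exact .inl (.inr h)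
  · exact .inr h

theorem measureReal_le_add_of_subset_union₅ {α : Type*} [MeasurableSpace α] (μ : Measure α)
    [IsFiniteMeasure μ] {s a b c d e : Set α} (h : s ⊆ a ∪ b ∪ c ∪ d ∪ e) :
    μ.real s ≤ μ.real a + μ.real b + μ.real c + μ.real d + μ.real e := by
  linarith [measureReal_mono (μ := μ) h, measureReal_union_le (μ := μ) (a ∪ b ∪ c ∪ d) e,
    measureReal_union_le (μ := μ) (a ∪ b ∪ c) d, measureReal_union_le (μ := μ) (a ∪ b) c,
    measureReal_union_le (μ := μ) a b]

section PickFreeze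

variable (ν : ∀ i, Measure (𝒳 i)) [∀ i, IsProbabilityMeasure (ν i)]

theorem measurable_Xpf (u : Finset (Fin p)) : Measurable (Xpf (𝒳 := 𝒳) u) := by
  refine measurable_pi_lambda _ fun i => ?_
  unfold Xpf
  split_ifs <;> fun_prop

theorem measurePreserving_Xpf (u : Finset (Fin p)) :
    MeasurePreserving (Xpf u) (pfMeasure ν) (Measure.pi ν) := by
  refine ⟨measurable_Xpf u, (Measure.pi_eq fun s hs => ?_).symm⟩
  have hpre : Xpf u ⁻¹' Set.univ.pi s = (u : Set (Fin p)).pi s ×ˢ (u : Set (Fin p))ᶜ.pi s := by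
    ext ω
    simp only [Set.mem_preimage, Set.mem_prod, Set.mem_pi, Set.mem_compl_iff,
      Finset.mem_coe, Xpf]
    refine ⟨fun h => ⟨fun i hi => by simpa [hi] using h i, fun i hi => by simpa [hi] using h i⟩,
      fun h i => ?_⟩
    by_cases hi : i ∈ u
    · simpa [hi] using h.1 i hi
    · simpa [hi] using h.2 i hi
  rw [Measure.map_apply (measurable_Xpf u) (.univ_pi hs), hpre, pfMeasure, Measure.prod_prod,
    ← Set.pi_univ_ite (u : Set (Fin p)) s, ← Set.pi_univ_ite (u : Set (Fin p))ᶜ s,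
    Measure.pi_pi, Measure.pi_pi, ← prod_mul_distrib]
  refine prod_congr rfl fun i _ => ?_
  by_cases hi : i ∈ u <;> simp [hi]

theorem memLp_Ypf {f : (∀ i, 𝒳 i) → ℝ} (hf : Measurable f) {q : ℝ≥0∞}
    (hY : MemLp (Yout f) q (pfMeasure ν)) (u : Finset (Fin p)) :
    MemLp (Ypf f u) q (pfMeasure ν) := by
  have hfst : MeasurePreserving Prod.fst (pfMeasure ν) (Measure.pi ν) := measurePreserving_fst
  have hf : MemLp f q (Measure.pi ν) := by
    rw [← hfst.map_eq]
    exact (memLp_map_measure_iff hf.aestronglyMeasurable measurable_fst.aemeasurable).2 hY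
  exact hf.comp_measurePreserving (measurePreserving_Xpf ν u)

theorem integral_Yout_mul_Ypf_sub_mul_sq {f : (∀ i, 𝒳 i) → ℝ} (hf : Measurable f)
    (hY2 : MemLp (Yout f) 2 (pfMeasure ν)) (hVar : variance (Yout f) (pfMeasure ν) ≠ 0)
    (hcent : ∫ ω, Yout f ω ∂(pfMeasure ν) = 0) (u : Finset (Fin p)) (t : ℝ) :
    ∫ ω, (Yout f ω * Ypf f u ω - t * Yout f ω ^ 2) ∂(pfMeasure ν) =
      (SCl ν f u - t) * variance (Yout f) (pfMeasure ν) := by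
  have hcov : ∫ ω, Yout f ω * Ypf f u ω ∂(pfMeasure ν) =
      SCl ν f u * variance (Yout f) (pfMeasure ν) := by
    rw [SCl, div_mul_cancel₀ _ hVar, cov, hcent, zero_mul, sub_zero]
  have hint : Integrable (fun ω => Yout f ω * Ypf f u ω) (pfMeasure ν) :=
    hY2.integrable_mul (memLp_Ypf ν hf hY2 u)
  rw [integral_sub hint (hY2.integrable_sq.const_mul t),
    integral_const_mul, hcov, ← variance_of_integral_eq_zero hY2.aemeasurable hcent]
  ring

end PickFreeze

theorem statement11_general
    {p : ℕ} {𝒳 : Fin p → Type*} [∀ i, MeasurableSpace (𝒳 i)]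
    (ν : ∀ i, Measure (𝒳 i)) [∀ i, IsProbabilityMeasure (ν i)]
    (f : (∀ i, 𝒳 i) → ℝ) (hf : Measurable f)
    (hY2 : MemLp (Yout f) 2 (pfMeasure ν))
    (hVar : variance (Yout f) (pfMeasure ν) ≠ 0)
    (u : Finset (Fin p))
    {Ω' : Type*} [MeasurableSpace Ω'] (P : Measure Ω') [IsProbabilityMeasure P]
    (W : ℕ → Ω' → ℝ × ℝ)
    (y : ℝ) (hy : 0 < y)
    (hcent : ∫ ω, Yout f ω ∂(pfMeasure ν) = 0)
    (N : ℕ)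
    (V S EU : ℝ)
    (hV : V = variance (Yout f) (pfMeasure ν))
    (hS : S = SCl ν f u)
    (hEU : EU = ∫ ω, (Yout f ω * Ypf f u ω - (S + y) * Yout f ω ^ 2) ∂(pfMeasure ν)) :
    (P {ω' | S + y ≤ SN1 W N ω'}).toReal ≤
      (P {ω' | N * (y * V / 2) ≤
          ∑ i ∈ Finset.range N,
            ((W i ω').1 * (W i ω').2 - (S + y) * (W i ω').1 ^ 2 - EU)}).toReal
      + (P {ω' | N * Real.sqrt (y * V / 2) ≤ ∑ i ∈ Finset.range N, (W i ω').1}).toReal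
      + (P {ω' | N * Real.sqrt (y * V / 2) ≤ ∑ i ∈ Finset.range N, -(W i ω').1}).toReal
      + (P {ω' | N * Real.sqrt (y * V / 2) ≤
          ∑ i ∈ Finset.range N, ((S + y) * (W i ω').1 - (W i ω').2)}).toReal
      + (P {ω' | N * Real.sqrt (y * V / 2) ≤
          ∑ i ∈ Finset.range N, -((S + y) * (W i ω').1 - (W i ω').2)}).toReal := by
  have hVpos : 0 < V := hV ▸ (variance_nonneg _ _).lt_of_ne' hVar
  have hEU' : EU = -(2 * (y * V / 2)) := by
    rw [hEU, integral_Yout_mul_Ypf_sub_mul_sq ν hf hY2 hVar hcent, ← hS, ← hV]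
    ring
  exact measureReal_le_add_of_subset_union₅ P
    (setOf_le_SN1_subset W N (by positivity) hEU')

/-- Decomposition of the upward deviation probability of `S^u_{N,Cl}`
into five elementary deviation probabilities. -/
theorem statement11
    {p : ℕ} {𝒳 : Fin p → Type*} [∀ i, MeasurableSpace (𝒳 i)]
    (ν : ∀ i, Measure (𝒳 i)) [∀ i, IsProbabilityMeasure (ν i)]
    (f : (∀ i, 𝒳 i) → ℝ) (hf : Measurable f)
    (hY2 : MemLp (Yout f) 2 (pfMeasure ν))
    (hVar : variance (Yout f) (pfMeasure ν) ≠ 0)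
    (u : Finset (Fin p))
    {Ω' : Type*} [MeasurableSpace Ω'] (P : Measure Ω') [IsProbabilityMeasure P]
    (W : ℕ → Ω' → ℝ × ℝ)
    (hindep : iIndepFun W P)
    (hident : ∀ i, IdentDistrib (W i) (fun ω => (Yout f ω, Ypf f u ω)) P (pfMeasure ν))
    (y : ℝ) (hy : 0 < y)
    (hcent : ∫ ω, Yout f ω ∂(pfMeasure ν) = 0)
    (N : ℕ)
    (V S EU : ℝ)
    (hV : V = variance (Yout f) (pfMeasure ν))
    (hS : S = SCl ν f u)
    (hEU : EU = ∫ ω, (Yout f ω * Ypf f u ω - (S + y) * Yout f ω ^ 2) ∂(pfMeasure ν)) :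
    (P {ω' | S + y ≤ SN1 W N ω'}).toReal ≤
      (P {ω' | N * (y * V / 2) ≤
          ∑ i ∈ Finset.range N,
            ((W i ω').1 * (W i ω').2 - (S + y) * (W i ω').1 ^ 2 - EU)}).toReal
      + (P {ω' | N * Real.sqrt (y * V / 2) ≤ ∑ i ∈ Finset.range N, (W i ω').1}).toReal
      + (P {ω' | N * Real.sqrt (y * V / 2) ≤ ∑ i ∈ Finset.range N, -(W i ω').1}).toReal
      + (P {ω' | N * Real.sqrt (y * V / 2) ≤
          ∑ i ∈ Finset.range N, ((S + y) * (W i ω').1 - (W i ω').2)}).toReal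
      + (P {ω' | N * Real.sqrt (y * V / 2) ≤
          ∑ i ∈ Finset.range N, -((S + y) * (W i ω').1 - (W i ω').2)}).toReal :=
  statement11_general ν f hf hY2 hVar u P W y hy hcent N V S EU hV hS hEU

end SobolPaper
end
end
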